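/- (Approximation guarantee of JAG-M-HEUR) With a strictly positive n₁×n₂ matrix A, P stripes (1 ≤ P < m, P < n₁) obtained by optimal 1D partitioning of the row-projection, and each stripe S allocated Q_S = ⌈(m−P)·L(S)/L(A)⌉ processors (where L(S) is the stripe load and L(A) the total load) and then optimally 1D-partitioned, the resulting maximum load is at most (m/(m−P) + mΔ/(P n₂) + Δ² m/(n₁ n₂)) · L(A)/m, where Δ = max A / min A. -/

import Mathlib

/-!
Both levels of the heuristic are controlled by one estimate for 1D partitioning: cutting an
array of total load `L` greedily where its prefix sums cross `L/k, 2L/k, …` gives `k` intervals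
of load at most `L/k + M`, where `M` bounds a single entry. When all entries of the matrix lie
within a factor `Δ` of each other, a row carries at most `Δ·L(A)/n₁` and a column of a stripe
`S` at most `Δ·L(S)/n₂`. Hence every stripe has `L(S) ≤ L(A)/P + Δ·L(A)/n₁`, and a stripe given
`Q_S ≥ (m-P)·L(S)/L(A)` processors is cut into pieces of load at most
`L(A)/(m-P) + Δ·L(S)/n₂`; substituting the first bound into the second gives the claim.
-/

/-- Optimal maximum interval load for partitioning the length-`n` prefix of the
array `f` into `k` contiguous (possibly empty) intervals. -/
noncomputable def opt1D (f : ℕ → ℝ) (n k : ℕ) : ℝ :=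
  sInf {L | ∃ c : ℕ → ℕ, Monotone c ∧ c 0 = 0 ∧ c k = n ∧
    L = ⨆ j : Fin k, ∑ i ∈ Finset.Ico (c j.1) (c (j.1 + 1)), f i}

open Finset

section OneDimensional

variable {f : ℕ → ℝ} {n : ℕ}

lemma opt1D_zero : opt1D f n 0 = 0 := by
  unfold opt1D
  apply le_antisymm (Real.sInf_nonpos _) (Real.sInf_nonneg _) <;>
    rintro _ ⟨c, -, -, -, rfl⟩ <;> simp

lemma opt1D_le_of_forall_le {k : ℕ} {c : ℕ → ℕ} {B : ℝ} (hf : ∀ i < n, 0 ≤ f i)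
    (hc : Monotone c) (hc0 : c 0 = 0) (hck : c k = n) (hB : 0 ≤ B)
    (hload : ∀ j < k, ∑ i ∈ Ico (c j) (c (j + 1)), f i ≤ B) : opt1D f n k ≤ B := by
  refine le_trans (csInf_le ?_ ⟨c, hc, hc0, hck, rfl⟩)
    (Real.iSup_le (fun j : Fin k => hload j.1 j.2) hB)
  refine ⟨0, ?_⟩
  rintro _ ⟨c', hc', -, hc'k, rfl⟩
  refine Real.iSup_nonneg fun j => sum_nonneg fun i hi => hf i ?_
  exact (mem_Ico.1 hi).2.trans_le (hc'k ▸ hc' j.2)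

lemma sum_Ico_le_opt1D {k : ℕ} {r : ℕ → ℕ}
    (hr : (⨆ s : Fin k, ∑ i ∈ Ico (r s) (r (s + 1)), f i) = opt1D f n k) {t : ℕ} (ht : t < k) :
    ∑ i ∈ Ico (r t) (r (t + 1)), f i ≤ opt1D f n k :=
  hr ▸ le_ciSup (f := fun s : Fin k => ∑ i ∈ Ico (r s) (r (s + 1)), f i)
    (Set.finite_range _).bddAbove ⟨t, ht⟩

noncomputable def greedyCut (f : ℕ → ℝ) (n : ℕ) (T : ℝ) : ℕ :=
  Nat.find (⟨n, Or.inr le_rfl⟩ : ∃ N, T ≤ ∑ i ∈ range N, f i ∨ n ≤ N)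

lemma greedyCut_le (T : ℝ) : greedyCut f n T ≤ n :=
  Nat.find_min' _ (Or.inr le_rfl)

lemma le_sum_range_greedyCut_or_eq (T : ℝ) :
    T ≤ ∑ i ∈ range (greedyCut f n T), f i ∨ greedyCut f n T = n :=
  (Nat.find_spec (⟨n, Or.inr le_rfl⟩ : ∃ N, T ≤ ∑ i ∈ range N, f i ∨ n ≤ N)).imp_right
    fun h => le_antisymm (greedyCut_le T) h

lemma greedyCut_mono : Monotone (greedyCut f n) :=
  fun _ _ hT => Nat.find_mono fun _ => Or.imp_left hT.trans

lemma greedyCut_of_nonpos {T : ℝ} (hT : T ≤ 0) : greedyCut f n T = 0 :=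
  (Nat.find_eq_zero _).2 (Or.inl (by simpa using hT))

lemma sum_range_greedyCut_le {T M : ℝ} (hfM : ∀ i < n, f i ≤ M) (hTM : 0 ≤ T + M) :
    ∑ i ∈ range (greedyCut f n T), f i ≤ T + M := by
  by_cases h0 : greedyCut f n T = 0
  · simpa [h0] using hTM
  have hbefore : ¬(T ≤ ∑ i ∈ range (greedyCut f n T - 1), f i ∨ n ≤ greedyCut f n T - 1) :=
    Nat.find_min _ (Nat.sub_one_lt h0)
  push Not at hbefore
  obtain ⟨d, hd⟩ : ∃ d, greedyCut f n T = d + 1 := ⟨_, (Nat.succ_pred_eq_of_ne_zero h0).symm⟩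
  rw [hd, Nat.add_sub_cancel] at hbefore
  rw [hd, sum_range_succ]
  linarith [hfM d hbefore.2]

-- The last cut is set to `n` directly: with zero entries the prefix sums may reach the total
-- load before `n`.
noncomputable def greedyPartition (f : ℕ → ℝ) (n k j : ℕ) : ℕ :=
  if j < k then greedyCut f n (j * (∑ i ∈ range n, f i) / k) else n

lemma greedyPartition_mono (hf : ∀ i < n, 0 ≤ f i) (k : ℕ) :
    Monotone (greedyPartition f n k) := by
  intro j₁ j₂ hj
  unfold greedyPartition
  by_cases h₂ : j₂ < k
  · simp only [h₂, hj.trans_lt h₂, if_true]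
    exact greedyCut_mono (by gcongr; exact sum_nonneg fun i hi => hf i (mem_range.1 hi))
  · simp only [h₂, if_false]
    split_ifs
    exacts [greedyCut_le _, le_rfl]

lemma greedyPartition_zero {k : ℕ} (hk : 0 < k) : greedyPartition f n k 0 = 0 := by
  simp [greedyPartition, hk, greedyCut_of_nonpos]

lemma greedyPartition_self (k : ℕ) : greedyPartition f n k k = n := by
  simp [greedyPartition]

lemma le_sum_range_greedyPartition (hf : ∀ i < n, 0 ≤ f i) {k j : ℕ} (hj : j ≤ k) :
    j * (∑ i ∈ range n, f i) / k ≤ ∑ i ∈ range (greedyPartition f n k j), f i := by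
  have hL : 0 ≤ ∑ i ∈ range n, f i := sum_nonneg fun i hi => hf i (mem_range.1 hi)
  have hjL : j * (∑ i ∈ range n, f i) / k ≤ ∑ i ∈ range n, f i := by
    rcases k.eq_zero_or_pos with rfl | hk
    · simpa using hL
    calc j * (∑ i ∈ range n, f i) / k ≤ k * (∑ i ∈ range n, f i) / k := by gcongr
      _ = ∑ i ∈ range n, f i := by field_simp
  unfold greedyPartition
  split_ifs
  · rcases le_sum_range_greedyCut_or_eq (f := f) (n := n) (j * (∑ i ∈ range n, f i) / k) with
      h | h
    · exact h
    · rwa [h]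
  · exact hjL

lemma sum_range_greedyPartition_le (hf : ∀ i < n, 0 ≤ f i) {M : ℝ} (hM : 0 ≤ M)
    (hfM : ∀ i < n, f i ≤ M) {k j : ℕ} (hk : 0 < k) (hj : j ≤ k) :
    ∑ i ∈ range (greedyPartition f n k j), f i ≤ j * (∑ i ∈ range n, f i) / k + M := by
  have hL : 0 ≤ ∑ i ∈ range n, f i := sum_nonneg fun i hi => hf i (mem_range.1 hi)
  unfold greedyPartition
  split_ifs with h
  · exact sum_range_greedyCut_le hfM (by positivity)
  · obtain rfl : j = k := by omega
    rw [mul_div_cancel_left₀ _ (by positivity)]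
    linarith

lemma opt1D_le_sum_div_add {M : ℝ} (hn : 0 < n) (hf : ∀ i < n, 0 ≤ f i)
    (hfM : ∀ i < n, f i ≤ M) (k : ℕ) : opt1D f n k ≤ (∑ i ∈ range n, f i) / k + M := by
  have hM : 0 ≤ M := (hf 0 hn).trans (hfM 0 hn)
  rcases k.eq_zero_or_pos with rfl | hk
  · simpa [opt1D_zero] using hM
  have hL : 0 ≤ ∑ i ∈ range n, f i := sum_nonneg fun i hi => hf i (mem_range.1 hi)
  have hmono := greedyPartition_mono hf k
  refine opt1D_le_of_forall_le hf hmono (greedyPartition_zero hk) (greedyPartition_self k)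
    (by positivity) fun j hj => ?_
  rw [sum_Ico_eq_sub _ (hmono j.le_succ)]
  have hstep : ((j + 1 : ℕ) : ℝ) * (∑ i ∈ range n, f i) / k - j * (∑ i ∈ range n, f i) / k =
      (∑ i ∈ range n, f i) / k := by
    push_cast; ring
  linarith [sum_range_greedyPartition_le hf hM hfM hk hj, le_sum_range_greedyPartition hf hj.le]

end OneDimensional

lemma sum_le_div_mul_sum_div_card {ι κ : Type*} {I : Finset ι} {J : Finset κ}
    {A : ι → κ → ℝ} {a b : ℝ} (ha : 0 < a) (hlo : ∀ i ∈ I, ∀ j ∈ J, a ≤ A i j)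
    (hhi : ∀ i ∈ I, ∀ j ∈ J, A i j ≤ b) {i₀ : ι} (hi₀ : i₀ ∈ I) :
    ∑ j ∈ J, A i₀ j ≤ b / a * (∑ i ∈ I, ∑ j ∈ J, A i j) / #I := by
  rcases J.eq_empty_or_nonempty with rfl | ⟨j₀, hj₀⟩
  · simp
  have hI : (0 : ℝ) < #I := by exact_mod_cast card_pos.2 ⟨i₀, hi₀⟩
  have hba : 0 ≤ b / a := div_nonneg ((ha.le.trans (hlo i₀ hi₀ j₀ hj₀)).trans
    (hhi i₀ hi₀ j₀ hj₀)) ha.le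
  have hrow : ∑ j ∈ J, A i₀ j ≤ #J * b := by
    simpa using sum_le_card_nsmul J _ b (hhi i₀ hi₀)
  have htotal : #I * (#J * a) ≤ ∑ i ∈ I, ∑ j ∈ J, A i j := by
    have := card_nsmul_le_sum I _ (#J * a) fun i hi => by
      simpa using card_nsmul_le_sum J _ a (hlo i hi)
    simpa using this
  calc ∑ j ∈ J, A i₀ j ≤ #J * b := hrow
    _ = b / a * (#I * (#J * a)) / #I := by field_simp
    _ ≤ b / a * (∑ i ∈ I, ∑ j ∈ J, A i j) / #I := by gcongr

lemma div_natCeil_mul_div_le {s L c : ℝ} (hc : 0 < c) (hL : 0 < L) :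
    s / ⌈c * s / L⌉₊ ≤ L / c := by
  rcases le_or_gt s 0 with hs | hs
  · have hQ : ⌈c * s / L⌉₊ = 0 :=
      Nat.ceil_eq_zero.2 (div_nonpos_of_nonpos_of_nonneg (mul_nonpos_of_nonneg_of_nonpos hc.le hs) hL.le)
    simp only [hQ, Nat.cast_zero, div_zero]
    positivity
  · calc s / ⌈c * s / L⌉₊ ≤ s / (c * s / L) :=
          div_le_div_of_nonneg_left hs.le (by positivity) (Nat.le_ceil _)
      _ = L / c := by field_simp

section EntryRatio

variable {n₁ n₂ : ℕ} {A : ℕ → ℕ → ℝ} {a b : ℝ}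

lemma sum_row_le_of_bounds (ha : 0 < a) (hlo : ∀ i < n₁, ∀ j < n₂, a ≤ A i j)
    (hhi : ∀ i < n₁, ∀ j < n₂, A i j ≤ b) {i : ℕ} (hi : i < n₁) :
    ∑ j ∈ range n₂, A i j ≤ b / a * (∑ i ∈ range n₁, ∑ j ∈ range n₂, A i j) / n₁ := by
  simpa using sum_le_div_mul_sum_div_card (I := range n₁) (J := range n₂) ha
    (by simpa using hlo) (by simpa using hhi) (mem_range.2 hi)

lemma sum_col_le_of_bounds (ha : 0 < a) (hlo : ∀ i < n₁, ∀ j < n₂, a ≤ A i j)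
    (hhi : ∀ i < n₁, ∀ j < n₂, A i j ≤ b) {u v : ℕ} (hv : v ≤ n₁) {j : ℕ} (hj : j < n₂) :
    ∑ i ∈ Ico u v, A i j ≤ b / a * (∑ i ∈ Ico u v, ∑ j ∈ range n₂, A i j) / n₂ := by
  have hmem : ∀ i ∈ Ico u v, i < n₁ := fun i hi => (mem_Ico.1 hi).2.trans_le hv
  have := sum_le_div_mul_sum_div_card (I := range n₂) (J := Ico u v) (A := fun j i => A i j) ha
    (fun j hj i hi => hlo i (hmem i hi) j (mem_range.1 hj))
    (fun j hj i hi => hhi i (hmem i hi) j (mem_range.1 hj)) (mem_range.2 hj)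
  rwa [sum_comm, card_range] at this

lemma sum_stripe_le_of_optimal (ha : 0 < a) (hlo : ∀ i < n₁, ∀ j < n₂, a ≤ A i j)
    (hhi : ∀ i < n₁, ∀ j < n₂, A i j ≤ b) (hn₁ : 0 < n₁) {P : ℕ} {r : ℕ → ℕ}
    (hr : (⨆ s : Fin P, ∑ i ∈ Ico (r s) (r (s + 1)), ∑ j ∈ range n₂, A i j) =
      opt1D (fun i => ∑ j ∈ range n₂, A i j) n₁ P) {t : ℕ} (ht : t < P) :
    ∑ i ∈ Ico (r t) (r (t + 1)), ∑ j ∈ range n₂, A i j ≤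
      (∑ i ∈ range n₁, ∑ j ∈ range n₂, A i j) / P +
        b / a * (∑ i ∈ range n₁, ∑ j ∈ range n₂, A i j) / n₁ :=
  (sum_Ico_le_opt1D hr ht).trans <| opt1D_le_sum_div_add hn₁
    (fun i hi => sum_nonneg fun j hj => (ha.trans_le (hlo i hi j (mem_range.1 hj))).le)
    (fun _ hi => sum_row_le_of_bounds ha hlo hhi hi) P

lemma opt1D_stripe_le (ha : 0 < a) (hlo : ∀ i < n₁, ∀ j < n₂, a ≤ A i j)
    (hhi : ∀ i < n₁, ∀ j < n₂, A i j ≤ b) (hn₂ : 0 < n₂) {u v : ℕ} (hv : v ≤ n₁) (Q : ℕ) :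
    opt1D (fun j => ∑ i ∈ Ico u v, A i j) n₂ Q ≤
      (∑ i ∈ Ico u v, ∑ j ∈ range n₂, A i j) / Q +
        b / a * (∑ i ∈ Ico u v, ∑ j ∈ range n₂, A i j) / n₂ := by
  have h := opt1D_le_sum_div_add hn₂
    (fun j hj => sum_nonneg fun i hi =>
      (ha.trans_le (hlo i ((mem_Ico.1 hi).2.trans_le hv) j hj)).le)
    (fun j hj => sum_col_le_of_bounds (u := u) ha hlo hhi hv hj) Q
  rwa [sum_comm] at h

end EntryRatio

/-- guarantee of JAG-M-HEUR: for a strictly positive `n₁ × n₂`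
matrix `A` with `Δ = (max A)/(min A)`, stripes `r` obtained by an optimal 1D
partition of the row projection into `P` stripes (`1 ≤ P < m`, `P < n₁`), and
each stripe `S` allocated `Q_S = ⌈(m−P)·L(S)/L(A)⌉` processors and then
partitioned optimally in 1D, every resulting rectangle load is at most
`(m/(m−P) + mΔ/(P n₂) + Δ² m/(n₁ n₂)) · L(A)/m`. -/
theorem stmt_8 (n₁ n₂ P m : ℕ) (hPm : P < m) (hPn : P < n₁)
    (hn₂ : 0 < n₂) (A : ℕ → ℕ → ℝ) (hpos : ∀ i < n₁, ∀ j < n₂, 0 < A i j)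
    (Δ : ℝ)
    (hΔ : Δ = ((Finset.range n₁ ×ˢ Finset.range n₂).sup'
        ((Finset.nonempty_range_iff.mpr (by omega)).product
          (Finset.nonempty_range_iff.mpr (by omega))) (fun p => A p.1 p.2)) /
      ((Finset.range n₁ ×ˢ Finset.range n₂).inf'
        ((Finset.nonempty_range_iff.mpr (by omega)).product
          (Finset.nonempty_range_iff.mpr (by omega))) (fun p => A p.1 p.2)))
    (r : ℕ → ℕ) (hr : Monotone r) (hrP : r P = n₁)
    (hropt : (⨆ t : Fin P, ∑ i ∈ Finset.Ico (r t.1) (r (t.1 + 1)),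
        ∑ j ∈ Finset.range n₂, A i j) =
      opt1D (fun i => ∑ j ∈ Finset.range n₂, A i j) n₁ P) :
    ∀ t < P,
      opt1D (fun j => ∑ i ∈ Finset.Ico (r t) (r (t + 1)), A i j) n₂
        (⌈((m : ℝ) - P) *
            (∑ i ∈ Finset.Ico (r t) (r (t + 1)), ∑ j ∈ Finset.range n₂, A i j) /
            (∑ i ∈ Finset.range n₁, ∑ j ∈ Finset.range n₂, A i j)⌉₊) ≤
      ((m : ℝ) / ((m : ℝ) - P) + m * Δ / (P * n₂) + Δ ^ 2 * m / (n₁ * n₂)) *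
        (∑ i ∈ Finset.range n₁, ∑ j ∈ Finset.range n₂, A i j) / m := by
  intro t ht
  set LA := ∑ i ∈ range n₁, ∑ j ∈ range n₂, A i j
  set LS := ∑ i ∈ Ico (r t) (r (t + 1)), ∑ j ∈ range n₂, A i j
  have hbox : ∀ i < n₁, ∀ j < n₂, (i, j) ∈ range n₁ ×ˢ range n₂ := fun i hi j hj => by
    simp [hi, hj]
  obtain ⟨a, b, ha, hlo, hhi, hΔab⟩ : ∃ a b : ℝ, 0 < a ∧ (∀ i < n₁, ∀ j < n₂, a ≤ A i j) ∧
      (∀ i < n₁, ∀ j < n₂, A i j ≤ b) ∧ Δ = b / a :=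
    ⟨_, _, (lt_inf'_iff _).2 fun p hp => hpos _ (mem_range.1 (mem_product.1 hp).1) _
        (mem_range.1 (mem_product.1 hp).2),
      fun i hi j hj => inf'_le _ (hbox i hi j hj),
      fun i hi j hj => le_sup' (fun p : ℕ × ℕ => A p.1 p.2) (hbox i hi j hj), hΔ⟩
  subst hΔab
  have hΔ0 : 0 ≤ b / a := div_nonneg ((ha.trans_le (hlo 0 (by omega) 0 hn₂)).le.trans
    (hhi 0 (by omega) 0 hn₂)) ha.le
  have hLA : 0 < LA := sum_pos (fun i hi => sum_pos (fun j hj => hpos i (mem_range.1 hi) j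
    (mem_range.1 hj)) (nonempty_range_iff.2 hn₂.ne')) (nonempty_range_iff.2 (by omega))
  have hmP : (0 : ℝ) < m - P := sub_pos.2 (by exact_mod_cast hPm)
  have hP : (0 : ℝ) < P := by exact_mod_cast (show 0 < P by omega)
  calc _ ≤ LS / ⌈((m : ℝ) - P) * LS / LA⌉₊ + b / a * LS / n₂ :=
        opt1D_stripe_le ha hlo hhi hn₂ (hrP ▸ hr ht) _
    _ ≤ LA / (m - P) + b / a * (LA / P + b / a * LA / n₁) / n₂ := by
        gcongr ?_ + ?_
        exacts [div_natCeil_mul_div_le hmP hLA,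
          by gcongr; exact sum_stripe_le_of_optimal ha hlo hhi (by omega) hropt ht]
    _ = _ := by
        have : (n₁ : ℝ) ≠ 0 := by exact_mod_cast (show n₁ ≠ 0 by omega)
        have : (n₂ : ℝ) ≠ 0 := by exact_mod_cast hn₂.ne'
        have : (m : ℝ) ≠ 0 := by exact_mod_cast (show m ≠ 0 by omega)
        field_simp
        ring
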